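/- arXiv:0804.2420 — 2 statements merged into one kernel-verified Lean document; each statement's English description precedes it below -/
import Mathlib

section
/- Let F ∈ R[x] have total degree ≤ d, and let ∇'F(x,y) and ∇''F(x,y) be two difference derivatives of F all of whose components have total degree ≤ d − 1. Then there exist polynomials T^{kl}(x,y) ∈ R[x,y] for 1 ≤ k < l ≤ n, each of total degree ≤ d − 2, such that for every m = 1,…,n: ∇'^mF(x,y) − ∇''^mF(x,y) = Σ_{k < m} (x_k − y_k)·T^{km}(x,y) − Σ_{l > m} (x_l − y_l)·T^{ml}(x,y). -/
/-
The substitution `x ↦ x + y` turns each `x_k - y_k` into the variable `x_k`, so the difference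
`D' - D''` of two difference derivatives becomes a syzygy `∑ x_k E_k = 0` of variables. Such
syzygies are combinations of the Koszul relations `x_k e_l - x_l e_k`, by induction on the number
of variables: setting the top variable `x_a` to `0` leaves a syzygy of the others, and the
quotients of the `E_k` by `x_a` supply the new coefficients `T^{ka}`. Each step divides by a
variable, whence the bound `d - 2`.
-/

open MvPolynomial Finset

noncomputable section

variable {R : Type*} [CommRing R] {n : ℕ}

/-- Total degree of a multivariate polynomial, valued in `WithBot ℤ`,
with the convention `deg 0 = ⊥` (i.e. `-∞`). -/
def mdeg {σ S : Type*} [CommSemiring S] (F : MvPolynomial σ S) : WithBot ℤ :=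
  F.support.sup fun m => ((m.sum fun _ e => e : ℕ) : ℤ)

/-- The embedding `R[x] → R[x,y]`, `x_i ↦ x_i` (the x-variables are `Sum.inl`,
the y-variables are `Sum.inr`). -/
def toX : MvPolynomial (Fin n) R →ₐ[R] MvPolynomial (Fin n ⊕ Fin n) R :=
  rename Sum.inl

/-- The embedding `R[x] → R[x,y]`, `x_i ↦ y_i`. -/
def toY : MvPolynomial (Fin n) R →ₐ[R] MvPolynomial (Fin n ⊕ Fin n) R :=
  rename Sum.inr

/-- `D = (∇¹F, …, ∇ⁿF)` is a difference derivative of `F`: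
`∑ k, (x_k - y_k) * ∇ᵏF(x,y) = F(x) - F(y)`. -/
def IsDiffDeriv (F : MvPolynomial (Fin n) R)
    (D : Fin n → MvPolynomial (Fin n ⊕ Fin n) R) : Prop :=
  ∑ k : Fin n, (X (Sum.inl k) - X (Sum.inr k)) * D k = toX F - toY F

/-- A difference derivative of `F` is monotonous if each component has total degree
`≤ deg F - 1` (equivalently `deg (∇ᵏF) + 1 ≤ deg F` in `WithBot ℤ`). -/
def IsMonotonous (F : MvPolynomial (Fin n) R)
    (D : Fin n → MvPolynomial (Fin n ⊕ Fin n) R) : Prop :=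
  ∀ k, mdeg (D k) + 1 ≤ mdeg F

/-- `δ_f = ∑ᵢ (deg fᵢ - 1)`. -/
def deltaF (f : Fin n → MvPolynomial (Fin n) R) : ℤ :=
  ∑ i, (((f i).totalDegree : ℤ) - 1)

/-- `(f)^{≤ d}_x`: sums `∑ fᵢ gᵢ` with `deg fᵢ + deg gᵢ ≤ d` for every `i`. -/
def boundedSpan (f : Fin n → MvPolynomial (Fin n) R) (d : WithBot ℤ) :
    Set (MvPolynomial (Fin n) R) :=
  {F | ∃ g : Fin n → MvPolynomial (Fin n) R,
    F = ∑ i, f i * g i ∧ ∀ i, mdeg (f i) + mdeg (g i) ≤ d}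

/-- A linear functional `L` annuls a set `S` if it vanishes on it. -/
def Annuls (L : MvPolynomial (Fin n) R →ₗ[R] R) (S : Set (MvPolynomial (Fin n) R)) : Prop :=
  ∀ F ∈ S, L F = 0

/-- `L(y_*).P` : apply the functional `L` to the `y`-part of `P ∈ R[x,y]`,
i.e. if `P = ∑_α A_α(x) y^α` then `L(y_*).P = ∑_α L(y^α) • A_α(x)`. -/
def applyY (L : MvPolynomial (Fin n) R →ₗ[R] R) (P : MvPolynomial (Fin n ⊕ Fin n) R) :
    MvPolynomial (Fin n) R :=
  ∑ m ∈ P.support,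
    C (L (monomial (Finsupp.sumFinsuppAddEquivProdFinsupp m).2 (1 : R)) * P.coeff m) *
      monomial (Finsupp.sumFinsuppAddEquivProdFinsupp m).1 (1 : R)

/-- `det‖∇f(x,y) ∇F(x,y); f(x) F(x)‖` : the `(n+1) × (n+1)` determinant whose entry `(k,i)`
is `∇ᵏfᵢ(x,y)` for `k, i ≤ n`, entry `(k, n+1)` is `∇ᵏF(x,y)`, entry `(n+1, i)` is `fᵢ(x)`,
and entry `(n+1, n+1)` is `F(x)`.  Here `Df i` is the tuple `(∇¹fᵢ, …, ∇ⁿfᵢ)`. -/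
def ddetX (f : Fin n → MvPolynomial (Fin n) R)
    (Df : Fin n → Fin n → MvPolynomial (Fin n ⊕ Fin n) R)
    (F : MvPolynomial (Fin n) R) (DF : Fin n → MvPolynomial (Fin n ⊕ Fin n) R) :
    MvPolynomial (Fin n ⊕ Fin n) R :=
  Matrix.det (Matrix.of fun k i : Fin (n + 1) =>
    if hk : (k : ℕ) < n then
      if hi : (i : ℕ) < n then Df ⟨i, hi⟩ ⟨k, hk⟩ else DF ⟨k, hk⟩
    else
      if hi : (i : ℕ) < n then toX (f ⟨i, hi⟩) else toX F)

/-- `det‖∇f(x,y) ∇F(x,y); f(y) F(y)‖` : as `ddetX` but with last row `(f₁(y),…,fₙ(y),F(y))`. -/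
def ddetY (f : Fin n → MvPolynomial (Fin n) R)
    (Df : Fin n → Fin n → MvPolynomial (Fin n ⊕ Fin n) R)
    (F : MvPolynomial (Fin n) R) (DF : Fin n → MvPolynomial (Fin n ⊕ Fin n) R) :
    MvPolynomial (Fin n ⊕ Fin n) R :=
  Matrix.det (Matrix.of fun k i : Fin (n + 1) =>
    if hk : (k : ℕ) < n then
      if hi : (i : ℕ) < n then Df ⟨i, hi⟩ ⟨k, hk⟩ else DF ⟨k, hk⟩
    else
      if hi : (i : ℕ) < n then toY (f ⟨i, hi⟩) else toY F)

section Degree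

variable {σ τ S : Type*} [CommSemiring S]

theorem mdeg_le_iff {P : MvPolynomial σ S} {c : ℤ} :
    mdeg P ≤ c ↔ ∀ m ∈ P.support, ((m.sum fun _ e => e : ℕ) : ℤ) ≤ c := by
  simp only [mdeg, Finset.sup_le_iff, WithBot.coe_le_coe]

theorem mdeg_le_totalDegree (P : MvPolynomial σ S) :
    mdeg P ≤ ((P.totalDegree : ℤ) : WithBot ℤ) :=
  mdeg_le_iff.2 fun _ hm => by exact_mod_cast le_totalDegree hm

theorem totalDegree_le_of_mdeg_le {P : MvPolynomial σ S} {c : ℤ} (hP : mdeg P ≤ c)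
    (h0 : P ≠ 0) : (P.totalDegree : ℤ) ≤ c := by
  obtain ⟨m, hm, hmax⟩ := P.support.exists_mem_eq_sup (support_nonempty.2 h0)
    fun m => m.sum fun _ e => e
  rw [totalDegree, hmax]
  exact mdeg_le_iff.1 hP m hm

theorem totalDegree_X_le (i : σ) : (X i : MvPolynomial σ S).totalDegree ≤ 1 :=
  (totalDegree_monomial_le _ _).trans (by simp)

theorem totalDegree_aeval_le {g : σ → MvPolynomial τ S} (hg : ∀ i, (g i).totalDegree ≤ 1)
    (P : MvPolynomial σ S) : (aeval g P).totalDegree ≤ P.totalDegree := by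
  conv_lhs => rw [P.as_sum, map_sum]
  refine totalDegree_finsetSum_le fun m hm => ?_
  rw [aeval_monomial, algebraMap_eq]
  calc (C (P.coeff m) * m.prod fun i k => g i ^ k).totalDegree
      ≤ ∑ i ∈ m.support, (g i ^ m i).totalDegree :=
        (totalDegree_mul _ _).trans
          (by rw [totalDegree_C, zero_add]; exact totalDegree_finsetProd _ _)
    _ ≤ ∑ i ∈ m.support, m i := sum_le_sum fun i _ =>
        (totalDegree_pow _ _).trans (by simpa using Nat.mul_le_mul_left (m i) (hg i))
    _ ≤ P.totalDegree := le_totalDegree hm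

theorem mdeg_aeval_le {g : σ → MvPolynomial τ S} (hg : ∀ i, (g i).totalDegree ≤ 1)
    {P : MvPolynomial σ S} {c : ℤ} (hP : mdeg P ≤ c) : mdeg (aeval g P) ≤ c := by
  rcases eq_or_ne P 0 with rfl | h0
  · simp [mdeg]
  refine (mdeg_le_totalDegree _).trans ?_
  exact_mod_cast (Int.ofNat_le.2 (totalDegree_aeval_le hg P)).trans
    (totalDegree_le_of_mdeg_le hP h0)

theorem mdeg_divMonomial_single_le {P : MvPolynomial σ S} {c : ℤ} (hP : mdeg P ≤ c) (i : σ) :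
    mdeg (P.divMonomial (Finsupp.single i 1)) ≤ ↑(c - 1) := by
  refine mdeg_le_iff.2 fun m hm => ?_
  have := mdeg_le_iff.1 hP _ (mem_support_iff.2 (by simpa [coeff_divMonomial] using hm))
  rw [Finsupp.sum_add_index' (fun _ => rfl) (fun _ _ _ => rfl),
    Finsupp.sum_single_index rfl] at this
  omega

end Degree

theorem mdeg_sub_le {σ : Type*} {P Q : MvPolynomial σ R} {c : ℤ} (hP : mdeg P ≤ c)
    (hQ : mdeg Q ≤ c) : mdeg (P - Q) ≤ c := by
  classical
  refine mdeg_le_iff.2 fun m hm => ?_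
  rcases mem_union.1 (support_sub σ P Q hm) with hm | hm
  exacts [mdeg_le_iff.1 hP m hm, mdeg_le_iff.1 hQ m hm]

theorem mdeg_neg_le {σ : Type*} {P : MvPolynomial σ R} {c : ℤ} (hP : mdeg P ≤ c) :
    mdeg (-P) ≤ c := by
  simpa [mdeg] using hP

section KillVar

variable {σ : Type*} [DecidableEq σ]

def killVar (i : σ) : MvPolynomial σ R →ₐ[R] MvPolynomial σ R :=
  aeval fun j => if j = i then 0 else X j

theorem killVar_X_self (i : σ) : killVar i (X i : MvPolynomial σ R) = 0 := by
  simp [killVar]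

theorem killVar_X_of_ne {i j : σ} (h : j ≠ i) : killVar i (X j : MvPolynomial σ R) = X j := by
  simp [killVar, h]

theorem killVar_eq_modMonomial (i : σ) (P : MvPolynomial σ R) :
    killVar i P = P.modMonomial (Finsupp.single i 1) := by
  have hvars : ((P.modMonomial (Finsupp.single i 1)).vars : Set σ) ⊆ {i}ᶜ := fun j hj => by
    obtain ⟨m, hm, hjm⟩ := (mem_vars_iff_mem_support _).1 hj
    rintro (rfl : j = i)
    exact mem_support_iff.1 hm
      (coeff_modMonomial_of_le _ (by simpa [Nat.one_le_iff_ne_zero] using hjm))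
  have hfix : killVar i (P.modMonomial (Finsupp.single i 1))
      = P.modMonomial (Finsupp.single i 1) := by
    convert aeval_ite_mem_eq_self _ hvars using 3
    simp [killVar, ite_not]
  conv_lhs => rw [← modMonomial_add_divMonomial_single P i]
  rw [map_add, map_mul, killVar_X_self, zero_mul, add_zero, hfix]

theorem killVar_add_X_mul_divMonomial (i : σ) (P : MvPolynomial σ R) :
    killVar i P + X i * P.divMonomial (Finsupp.single i 1) = P := by
  rw [killVar_eq_modMonomial, modMonomial_add_divMonomial_single]

theorem mdeg_killVar_le (i : σ) {P : MvPolynomial σ R} {c : ℤ} (hP : mdeg P ≤ c) :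
    mdeg (killVar i P) ≤ c :=
  mdeg_aeval_le (fun j => by split_ifs <;> simp [totalDegree_X_le]) hP

variable {ι : Type*} {s : Finset ι} {w : ι → σ} {i : σ} {A : MvPolynomial σ R}
  {E : ι → MvPolynomial σ R}

theorem sum_X_mul_killVar_eq_zero (hw : ∀ k ∈ s, w k ≠ i)
    (h : X i * A + ∑ k ∈ s, X (w k) * E k = 0) :
    ∑ k ∈ s, X (w k) * killVar i (E k) = 0 := by
  have := congrArg (killVar i) h
  rwa [map_add, map_mul, killVar_X_self, zero_mul, zero_add, map_sum, map_zero,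
    sum_congr rfl fun k hk => by rw [map_mul, killVar_X_of_ne (hw k hk)]] at this

theorem eq_neg_sum_X_mul_divMonomial (hw : ∀ k ∈ s, w k ≠ i)
    (h : X i * A + ∑ k ∈ s, X (w k) * E k = 0) :
    A = -∑ k ∈ s, X (w k) * (E k).divMonomial (Finsupp.single i 1) := by
  have hsum : ∑ k ∈ s, X (w k) * E k
      = X i * ∑ k ∈ s, X (w k) * (E k).divMonomial (Finsupp.single i 1) := by
    calc ∑ k ∈ s, X (w k) * E k
        = ∑ k ∈ s, (X (w k) * killVar i (E k)
            + X i * (X (w k) * (E k).divMonomial (Finsupp.single i 1))) :=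
          sum_congr rfl fun k _ => by
            linear_combination -X (w k) * killVar_add_X_mul_divMonomial i (E k)
      _ = _ := by rw [sum_add_distrib, sum_X_mul_killVar_eq_zero hw h, zero_add, mul_sum]
  rw [eq_neg_iff_add_eq_zero]
  exact (isRegular_X (n := i)).left (by simp only [mul_add, ← hsum, h, mul_zero])

end KillVar

theorem exists_koszul_of_sum_X_mul_eq_zero {σ ι : Type*} [LinearOrder ι] {v : ι → σ}
    (hv : Function.Injective v) {c : ℤ} (s : Finset ι) {E : ι → MvPolynomial σ R}
    (hE : ∑ k ∈ s, X (v k) * E k = 0) (hdeg : ∀ k, mdeg (E k) ≤ c) :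
    ∃ T : ι → ι → MvPolynomial σ R, (∀ k l, mdeg (T k l) ≤ ↑(c - 1)) ∧
      ∀ m ∈ s, E m =
        ∑ k ∈ s with k < m, X (v k) * T k m - ∑ l ∈ s with m < l, X (v l) * T m l := by
  classical
  induction s using Finset.induction_on_max generalizing E with
  | empty => exact ⟨0, fun _ _ => by simp [mdeg], by simp⟩
  | insert a s hlt ih =>
    have ha : a ∉ s := fun h => lt_irrefl a (hlt a h)
    have hva : ∀ k ∈ s, v k ≠ v a := fun k hk => hv.ne (hlt k hk).ne
    rw [sum_insert ha] at hE
    set H := fun k => (E k).divMonomial (Finsupp.single (v a) 1)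
    obtain ⟨T, hTdeg, hT⟩ :=
      ih (sum_X_mul_killVar_eq_zero hva hE) fun k => mdeg_killVar_le _ (hdeg k)
    refine ⟨fun k l => if l = a then -H k else T k l, fun k l => ?_, fun m hm => ?_⟩
    · dsimp only
      split_ifs
      · exact mdeg_neg_le (mdeg_divMonomial_single_le (hdeg k) _)
      · exact hTdeg k l
    dsimp only
    rcases mem_insert.1 hm with rfl | hm
    · rw [filter_insert, if_neg (lt_irrefl m), filter_true_of_mem hlt, filter_insert,
        if_neg (lt_irrefl m), filter_false_of_mem fun l hl => (hlt l hl).not_gt, sum_empty,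
        sub_zero, eq_neg_sum_X_mul_divMonomial hva hE, ← sum_neg_distrib]
      exact sum_congr rfl fun k _ => by rw [if_pos rfl, mul_neg]
    · have hma : m < a := hlt m hm
      rw [filter_insert, if_neg hma.not_gt, filter_insert, if_pos hma,
        sum_insert fun h => ha (mem_filter.1 h).1, if_pos rfl,
        sum_congr rfl fun k _ => by rw [if_neg hma.ne],
        sum_congr rfl fun l (hl : l ∈ s.filter (m < ·)) => by
          rw [if_neg (hlt l (mem_filter.1 hl).1).ne],
        ← killVar_add_X_mul_divMonomial (v a) (E m), hT m hm]
      ring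

section Shear

variable {σ : Type*}

def shearXY : MvPolynomial (σ ⊕ σ) R ≃ₐ[R] MvPolynomial (σ ⊕ σ) R :=
  AlgEquiv.ofAlgHom (aeval (Sum.elim (fun i => X (.inl i) + X (.inr i)) (X ∘ .inr)))
    (aeval (Sum.elim (fun i => X (.inl i) - X (.inr i)) (X ∘ .inr)))
    (by ext (i | i) <;> simp) (by ext (i | i) <;> simp)

theorem shearXY_X_inl_sub_X_inr (i : σ) :
    shearXY (X (.inl i) - X (.inr i) : MvPolynomial (σ ⊕ σ) R) = X (.inl i) := by
  simp [shearXY]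

theorem shearXY_symm_X_inl (i : σ) :
    shearXY.symm (X (.inl i) : MvPolynomial (σ ⊕ σ) R) = X (.inl i) - X (.inr i) := by
  simp [shearXY]

theorem mdeg_shearXY_le {P : MvPolynomial (σ ⊕ σ) R} {c : ℤ} (hP : mdeg P ≤ c) :
    mdeg (shearXY P) ≤ c :=
  mdeg_aeval_le (fun i => by
    rcases i with i | i
    · exact (totalDegree_add _ _).trans (max_le (totalDegree_X_le _) (totalDegree_X_le _))
    · exact totalDegree_X_le _) hP

theorem mdeg_shearXY_symm_le {P : MvPolynomial (σ ⊕ σ) R} {c : ℤ} (hP : mdeg P ≤ c) :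
    mdeg (shearXY.symm P) ≤ c :=
  mdeg_aeval_le (fun i => by
    rcases i with i | i
    · exact (totalDegree_sub _ _).trans (max_le (totalDegree_X_le _) (totalDegree_X_le _))
    · exact totalDegree_X_le _) hP

end Shear

theorem IsDiffDeriv.sum_mul_sub_eq_zero {F : MvPolynomial (Fin n) R}
    {D' D'' : Fin n → MvPolynomial (Fin n ⊕ Fin n) R} (hD' : IsDiffDeriv F D')
    (hD'' : IsDiffDeriv F D'') :
    ∑ k, (X (.inl k) - X (.inr k)) * (D' k - D'' k) = 0 := by
  simp only [mul_sub, sum_sub_distrib]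
  exact sub_eq_zero.2 ((hD' : _ = _).trans (hD'' : _ = _).symm)

theorem diffDeriv_sub_eq_general {R : Type*} [CommRing R] {n : ℕ}
    (d : ℤ) (F : MvPolynomial (Fin n) R)
    (D' D'' : Fin n → MvPolynomial (Fin n ⊕ Fin n) R)
    (hD' : IsDiffDeriv F D') (hD'' : IsDiffDeriv F D'')
    (hdeg' : ∀ k, mdeg (D' k) ≤ ((d - 1 : ℤ) : WithBot ℤ))
    (hdeg'' : ∀ k, mdeg (D'' k) ≤ ((d - 1 : ℤ) : WithBot ℤ)) :
    ∃ T : Fin n → Fin n → MvPolynomial (Fin n ⊕ Fin n) R,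
      (∀ k l, k < l → mdeg (T k l) ≤ ((d - 2 : ℤ) : WithBot ℤ)) ∧
      ∀ m : Fin n,
        D' m - D'' m =
          (∑ k ∈ Finset.univ.filter (fun k => k < m),
            (X (Sum.inl k) - X (Sum.inr k)) * T k m) -
          ∑ l ∈ Finset.univ.filter (fun l => m < l),
            (X (Sum.inl l) - X (Sum.inr l)) * T m l := by
  have hsyz : ∑ k, X (.inl k) * shearXY (D' k - D'' k) = 0 := by
    simpa only [map_sum, map_mul, shearXY_X_inl_sub_X_inr, map_zero]
      using congrArg shearXY (hD'.sum_mul_sub_eq_zero hD'')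
  obtain ⟨T, hTdeg, hT⟩ := exists_koszul_of_sum_X_mul_eq_zero Sum.inl_injective univ hsyz
    fun k => mdeg_shearXY_le (mdeg_sub_le (hdeg' k) (hdeg'' k))
  refine ⟨fun k l => shearXY.symm (T k l), fun k l _ => ?_, fun m => ?_⟩
  · simpa only [sub_sub, one_add_one_eq_two] using mdeg_shearXY_symm_le (hTdeg k l)
  · simpa only [map_sub, map_sum, map_mul, shearXY_symm_X_inl, AlgEquiv.symm_apply_apply]
      using congrArg shearXY.symm (hT m (mem_univ m))

/-- two difference derivatives of `F` of componentwise degree `≤ d - 1`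
differ by a combination of the trivial syzygies `(x_k - y_k)·û_l - (x_l - y_l)·û_k`
with coefficients `T^{kl}` of degree `≤ d - 2`. -/
theorem diffDeriv_sub_eq {R : Type*} [CommRing R] {n : ℕ}
    (d : ℤ) (F : MvPolynomial (Fin n) R) (hF : mdeg F ≤ (d : WithBot ℤ))
    (D' D'' : Fin n → MvPolynomial (Fin n ⊕ Fin n) R)
    (hD' : IsDiffDeriv F D') (hD'' : IsDiffDeriv F D'')
    (hdeg' : ∀ k, mdeg (D' k) ≤ ((d - 1 : ℤ) : WithBot ℤ))
    (hdeg'' : ∀ k, mdeg (D'' k) ≤ ((d - 1 : ℤ) : WithBot ℤ)) :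
    ∃ T : Fin n → Fin n → MvPolynomial (Fin n ⊕ Fin n) R,
      (∀ k l, k < l → mdeg (T k l) ≤ ((d - 2 : ℤ) : WithBot ℤ)) ∧
      ∀ m : Fin n,
        D' m - D'' m =
          (∑ k ∈ Finset.univ.filter (fun k => k < m),
            (X (Sum.inl k) - X (Sum.inr k)) * T k m) -
          ∑ l ∈ Finset.univ.filter (fun l => m < l),
            (X (Sum.inl l) - X (Sum.inr l)) * T m l :=
  diffDeriv_sub_eq_general d F D' D'' hD' hD'' hdeg' hdeg''
end
end

section
/- Let f = (f_1,…,f_n) and F be polynomials in R[x], with chosen difference derivatives ∇f_i(x,y) of each f_i and ∇F(x,y) of F. Then det‖∇f(x,y) ∇F(x,y); f(x) F(x)‖ = det‖∇f(x,y) ∇F(x,y); f(y) F(y)‖, i.e. the determinant with last row (f_1(x),…,f_n(x),F(x)) equals the determinant with last row (f_1(y),…,f_n(y),F(y)). -/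
open MvPolynomial Finset

noncomputable section

variable {R : Type*} [CommRing R] {n : ℕ}

/-- `det‖∇f ∇F; f(x) F(x)‖ = det‖∇f ∇F; f(y) F(y)‖`. -/
theorem ddetX_eq_ddetY {R : Type*} [CommRing R] {n : ℕ}
    (f : Fin n → MvPolynomial (Fin n) R)
    (Df : Fin n → Fin n → MvPolynomial (Fin n ⊕ Fin n) R)
    (hDf : ∀ i, IsDiffDeriv (f i) (Df i))
    (F : MvPolynomial (Fin n) R) (DF : Fin n → MvPolynomial (Fin n ⊕ Fin n) R)
    (hDF : IsDiffDeriv F DF) :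
    ddetX f Df F DF = ddetY f Df F DF := by
  classical
  set M : Matrix (Fin (n+1)) (Fin (n+1)) (MvPolynomial (Fin n ⊕ Fin n) R) :=
    Matrix.of fun k i : Fin (n + 1) =>
      if hk : (k : ℕ) < n then
        if hi : (i : ℕ) < n then Df ⟨i, hi⟩ ⟨k, hk⟩ else DF ⟨k, hk⟩
      else
        if hi : (i : ℕ) < n then toX (f ⟨i, hi⟩) else toX F with hM
  set rowY : Fin (n+1) → MvPolynomial (Fin n ⊕ Fin n) R :=
    fun i => if hi : (i : ℕ) < n then toY (f ⟨i, hi⟩) else toY F with hrowY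
  set c : Fin (n+1) → MvPolynomial (Fin n ⊕ Fin n) R :=
    fun j => if h : (j : ℕ) < n then
      (X (Sum.inl (⟨j, h⟩ : Fin n)) - X (Sum.inr (⟨j, h⟩ : Fin n))) else 0 with hc
  have hrow : ∀ k : Fin n, M (Fin.castSucc k) =
      fun i : Fin (n+1) => if hi : (i : ℕ) < n then Df ⟨i, hi⟩ k else DF k := by
    intro k
    funext i
    simp only [hM, Matrix.of_apply, Fin.coe_castSucc, k.isLt, dif_pos, Fin.eta]
  have hlastlt : ¬ ((Fin.last n : ℕ) < n) := by simp
  have hsum : M (Fin.last n) = rowY + ∑ j : Fin (n+1), c j • M j := by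
    rw [Fin.sum_univ_castSucc]
    have hclast : c (Fin.last n) = 0 := by simp [hc]
    rw [hclast, zero_smul, add_zero]
    funext i
    simp only [Pi.add_apply, Finset.sum_apply, Pi.smul_apply, smul_eq_mul]
    by_cases hi : (i : ℕ) < n
    · have h1 : M (Fin.last n) i = toX (f ⟨i, hi⟩) := by
        simp [hM, hlastlt, hi]
      have h2 : ∀ k : Fin n, M (Fin.castSucc k) i = Df ⟨i, hi⟩ k := by
        intro k; rw [hrow k]; simp [hi]
      rw [h1]
      have := hDf ⟨i, hi⟩
      unfold IsDiffDeriv at this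
      have : toX (f ⟨i, hi⟩) = toY (f ⟨i, hi⟩) +
          ∑ k : Fin n, (X (Sum.inl k) - X (Sum.inr k)) * Df ⟨i, hi⟩ k := by
        rw [this]; ring
      rw [this, hrowY]
      simp only [hi, dif_pos]
      congr 1
      refine Finset.sum_congr rfl fun k _ => ?_
      rw [h2 k]
      simp [hc, Fin.coe_castSucc, k.isLt]
    · have h1 : M (Fin.last n) i = toX F := by simp [hM, hlastlt, hi]
      have h2 : ∀ k : Fin n, M (Fin.castSucc k) i = DF k := by
        intro k; rw [hrow k]; simp [hi]
      rw [h1]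
      have hF := hDF
      unfold IsDiffDeriv at hF
      have : toX F = toY F + ∑ k : Fin n, (X (Sum.inl k) - X (Sum.inr k)) * DF k := by
        rw [hF]; ring
      rw [this, hrowY]
      simp only [hi, dif_neg, not_false_iff]
      congr 1
      refine Finset.sum_congr rfl fun k _ => ?_
      rw [h2 k]
      simp [hc, Fin.coe_castSucc, k.isLt]
  have hX : ddetX f Df F DF = M.det := rfl
  have hY : ddetY f Df F DF = (M.updateRow (Fin.last n) rowY).det := by
    unfold ddetY
    congr 1
    ext k i
    by_cases hk : (k : ℕ) < n
    · have hkne : k ≠ Fin.last n := by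
        intro h; rw [h] at hk; exact hlastlt hk
      rw [Matrix.updateRow_ne hkne]
      simp [hM, hk]
    · have hkeq : k = Fin.last n := by
        have := k.isLt
        ext
        omega
      subst hkeq
      rw [Matrix.updateRow_self]
      simp [hrowY, hlastlt]
  rw [hX, hY]
  have := Matrix.updateRow_eq_self M (Fin.last n)
  calc M.det = (M.updateRow (Fin.last n) (M (Fin.last n))).det := by rw [this]
    _ = (M.updateRow (Fin.last n) (rowY + ∑ j : Fin (n+1), c j • M j)).det := by rw [hsum]
    _ = (M.updateRow (Fin.last n) rowY).det +
        (M.updateRow (Fin.last n) (∑ j : Fin (n+1), c j • M j)).det :=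
      Matrix.det_updateRow_add M (Fin.last n) _ _
    _ = (M.updateRow (Fin.last n) rowY).det := by
      rw [Matrix.det_updateRow_sum M (Fin.last n) c]
      have : c (Fin.last n) = 0 := by simp [hc]
      rw [this, zero_smul, add_zero]

end
end
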